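/- arXiv:1804.00076 — 3 statements merged into one kernel-verified Lean document; each statement's English description precedes it below -/
import Mathlib

section
/- Suppose ⟨M_α : α<κ⟩, ⟨N_α : α<κ⟩, ⟨P_β : β<λ⟩, ⟨Q_β : β<λ⟩ are families of non-empty, pairwise disjoint sets. If ⋃_{α<κ} M_α × N_α ⊆ ⋃_{β<λ} P_β × Q_β, then there is a unique function θ : κ → λ such that M_α ⊆ P_{θ(α)} and N_α ⊆ Q_{θ(α)} for every α < κ. -/
theorem stmt3 {A B : Type*} {ι κ : Type*} (M : ι → Set A) (N : ι → Set B)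
    (P : κ → Set A) (Q : κ → Set B)
    (hM : ∀ i, (M i).Nonempty) (hN : ∀ i, (N i).Nonempty)
    (hP : ∀ j, (P j).Nonempty) (hQ : ∀ j, (Q j).Nonempty)
    (hMd : ∀ i i', i ≠ i' → M i ∩ M i' = ∅)
    (hNd : ∀ i i', i ≠ i' → N i ∩ N i' = ∅)
    (hPd : ∀ j j', j ≠ j' → P j ∩ P j' = ∅)
    (hQd : ∀ j j', j ≠ j' → Q j ∩ Q j' = ∅)
    (hsub : (⋃ i, M i ×ˢ N i) ⊆ ⋃ j, P j ×ˢ Q j) :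
    ∃! θ : ι → κ, ∀ i, M i ⊆ P (θ i) ∧ N i ⊆ Q (θ i) := by
  have key : ∀ i, ∃ j, M i ⊆ P j ∧ N i ⊆ Q j := by
    intro i
    obtain ⟨a, ha⟩ := hM i
    obtain ⟨b, hb⟩ := hN i
    have hab : ((a, b) : A × B) ∈ ⋃ j, P j ×ˢ Q j :=
      hsub (Set.mem_iUnion.mpr ⟨i, ⟨ha, hb⟩⟩)
    obtain ⟨j, haj, hbj⟩ := Set.mem_iUnion.mp hab
    refine ⟨j, ?_, ?_⟩
    · intro a' ha'
      have : ((a', b) : A × B) ∈ ⋃ j, P j ×ˢ Q j :=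
        hsub (Set.mem_iUnion.mpr ⟨i, ⟨ha', hb⟩⟩)
      obtain ⟨j', haj', hbj'⟩ := Set.mem_iUnion.mp this
      have : j' = j := by
        by_contra h
        have := hQd j' j h
        exact absurd this (Set.nonempty_iff_ne_empty.mp ⟨b, hbj', hbj⟩)
      exact this ▸ haj'
    · intro b' hb'
      have : ((a, b') : A × B) ∈ ⋃ j, P j ×ˢ Q j :=
        hsub (Set.mem_iUnion.mpr ⟨i, ⟨ha, hb'⟩⟩)
      obtain ⟨j', haj', hbj'⟩ := Set.mem_iUnion.mp this
      have : j' = j := by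
        by_contra h
        have := hPd j' j h
        exact absurd this (Set.nonempty_iff_ne_empty.mp ⟨a, haj', haj⟩)
      exact this ▸ hbj'
  choose θ hθ using key
  refine ⟨θ, hθ, ?_⟩
  intro θ' hθ'
  funext i
  obtain ⟨a, ha⟩ := hM i
  by_contra h
  have := hPd (θ' i) (θ i) h
  exact absurd this (Set.nonempty_iff_ne_empty.mp ⟨a, (hθ' i).1 ha, (hθ i).1 ha⟩)
end

section
/- Suppose ⟨M_α : α<κ⟩, ⟨N_α : α<κ⟩, ⟨P_β : β<λ⟩, ⟨Q_β : β<λ⟩ are families of non-empty, pairwise disjoint sets and ⋃_{α<κ} M_α × N_α = ⋃_{β<λ} P_β × Q_β. Then there is a bijection θ : κ → λ such that M_α = P_{θ(α)} and N_α = Q_{θ(α)} for every α < κ. -/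
theorem stmt4 {A B : Type*} {ι κ : Type*} (M : ι → Set A) (N : ι → Set B)
    (P : κ → Set A) (Q : κ → Set B)
    (hM : ∀ i, (M i).Nonempty) (hN : ∀ i, (N i).Nonempty)
    (hP : ∀ j, (P j).Nonempty) (hQ : ∀ j, (Q j).Nonempty)
    (hMd : ∀ i i', i ≠ i' → M i ∩ M i' = ∅)
    (hNd : ∀ i i', i ≠ i' → N i ∩ N i' = ∅)
    (hPd : ∀ j j', j ≠ j' → P j ∩ P j' = ∅)
    (hQd : ∀ j j', j ≠ j' → Q j ∩ Q j' = ∅)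
    (heq : (⋃ i, M i ×ˢ N i) = ⋃ j, P j ×ˢ Q j) :
    ∃ θ : ι → κ, Function.Bijective θ ∧ ∀ i, M i = P (θ i) ∧ N i = Q (θ i) := by
  have sameM : ∀ {i i' : ι} {x : A}, x ∈ M i → x ∈ M i' → i = i' := by
    intro i i' x h h'
    by_contra hne
    exact absurd (hMd i i' hne ▸ (⟨h, h'⟩ : x ∈ M i ∩ M i')) (Set.notMem_empty x)
  have sameN : ∀ {i i' : ι} {x : B}, x ∈ N i → x ∈ N i' → i = i' := by
    intro i i' x h h'
    by_contra hne
    exact absurd (hNd i i' hne ▸ (⟨h, h'⟩ : x ∈ N i ∩ N i')) (Set.notMem_empty x)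
  have sameP : ∀ {j j' : κ} {x : A}, x ∈ P j → x ∈ P j' → j = j' := by
    intro j j' x h h'
    by_contra hne
    exact absurd (hPd j j' hne ▸ (⟨h, h'⟩ : x ∈ P j ∩ P j')) (Set.notMem_empty x)
  have sameQ : ∀ {j j' : κ} {x : B}, x ∈ Q j → x ∈ Q j' → j = j' := by
    intro j j' x h h'
    by_contra hne
    exact absurd (hQd j j' hne ▸ (⟨h, h'⟩ : x ∈ Q j ∩ Q j')) (Set.notMem_empty x)
  have key : ∀ i, ∃ j, M i = P j ∧ N i = Q j := by
    intro i
    obtain ⟨a, ha⟩ := hM i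
    obtain ⟨b, hb⟩ := hN i
    have hab : ((a, b) : A × B) ∈ ⋃ j, P j ×ˢ Q j := by
      rw [← heq]; exact Set.mem_iUnion.2 ⟨i, ⟨ha, hb⟩⟩
    obtain ⟨j, haj, hbj⟩ := Set.mem_iUnion.1 hab
    refine ⟨j, ?_, ?_⟩
    · ext a'
      constructor
      · intro ha'
        have h2 : ((a', b) : A × B) ∈ ⋃ j, P j ×ˢ Q j := by
          rw [← heq]; exact Set.mem_iUnion.2 ⟨i, ⟨ha', hb⟩⟩
        obtain ⟨j', ha'2, hb'2⟩ := Set.mem_iUnion.1 h2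
        exact (sameQ hb'2 hbj) ▸ ha'2
      · intro ha'
        have h2 : ((a', b) : A × B) ∈ ⋃ i, M i ×ˢ N i := by
          rw [heq]; exact Set.mem_iUnion.2 ⟨j, ⟨ha', hbj⟩⟩
        obtain ⟨i', ha'2, hb'2⟩ := Set.mem_iUnion.1 h2
        exact (sameN hb'2 hb) ▸ ha'2
    · ext b'
      constructor
      · intro hb'
        have h2 : ((a, b') : A × B) ∈ ⋃ j, P j ×ˢ Q j := by
          rw [← heq]; exact Set.mem_iUnion.2 ⟨i, ⟨ha, hb'⟩⟩
        obtain ⟨j', ha'2, hb'2⟩ := Set.mem_iUnion.1 h2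
        exact (sameP ha'2 haj) ▸ hb'2
      · intro hb'
        have h2 : ((a, b') : A × B) ∈ ⋃ i, M i ×ˢ N i := by
          rw [heq]; exact Set.mem_iUnion.2 ⟨j, ⟨haj, hb'⟩⟩
        obtain ⟨i', ha'2, hb'2⟩ := Set.mem_iUnion.1 h2
        exact (sameM ha'2 ha) ▸ hb'2
  choose θ hθ using key
  refine ⟨θ, ⟨?_, ?_⟩, hθ⟩
  · intro i i' h
    obtain ⟨a, ha⟩ := hM i
    have : a ∈ M i' := by
      rw [(hθ i').1, ← h, ← (hθ i).1]; exact ha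
    exact sameM ha this
  · intro j
    obtain ⟨a, ha⟩ := hP j
    obtain ⟨b, hb⟩ := hQ j
    have hab : ((a, b) : A × B) ∈ ⋃ i, M i ×ˢ N i := by
      rw [heq]; exact Set.mem_iUnion.2 ⟨j, ⟨ha, hb⟩⟩
    obtain ⟨i, hai, hbi⟩ := Set.mem_iUnion.1 hab
    have : a ∈ P (θ i) := (hθ i).1 ▸ hai
    exact ⟨i, sameP this ha⟩
end

section
/- Let G_x, G_y be groups and let φ_xy : G_x/H_xy → G_y/K_xy and φ_yx : G_y/H_yx → G_x/K_yx be isomorphisms of quotients by normal subgroups, with φ_yx = φ_xy⁻¹. Suppose H_xz ⊴ G_x and H_yz ⊴ G_y are additional normal subgroups satisfying H_xz ⊆ φ_xy⁻¹[K_xy ∘ H_yz] and H_yz ⊆ φ_yx⁻¹[K_yx ∘ H_xz]. Then φ_xy[H_xy ∘ H_xz] = K_xy ∘ H_yz. -/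
open scoped Pointwise

theorem stmt14 {Gx Gy : Type*} [Group Gx] [Group Gy]
    (Hxy Hxz : Subgroup Gx) (Kxy Hyz : Subgroup Gy)
    [Hxy.Normal] [Hxz.Normal] [Kxy.Normal] [Hyz.Normal]
    (φxy : Gx ⧸ Hxy ≃* Gy ⧸ Kxy)
    (h1 : (Hxz : Set Gx) ⊆ (fun g : Gx => φxy (QuotientGroup.mk g)) ⁻¹'
      ((QuotientGroup.mk : Gy → Gy ⧸ Kxy) '' ((Kxy : Set Gy) * (Hyz : Set Gy))))
    (h2 : (Hyz : Set Gy) ⊆ (fun g : Gy => φxy.symm (QuotientGroup.mk g)) ⁻¹'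
      ((QuotientGroup.mk : Gx → Gx ⧸ Hxy) '' ((Hxy : Set Gx) * (Hxz : Set Gx)))) :
    (QuotientGroup.mk : Gy → Gy ⧸ Kxy) ⁻¹'
      ((fun g : Gx => φxy (QuotientGroup.mk g)) '' ((Hxy : Set Gx) * (Hxz : Set Gx))) =
    (Kxy : Set Gy) * (Hyz : Set Gy) := by
  ext y
  simp only [Set.mem_preimage, Set.mem_image]
  constructor
  · rintro ⟨x, hx, hxy⟩
    obtain ⟨a, ha, b, hb, rfl⟩ := hx
    have hmk : (QuotientGroup.mk (a * b) : Gx ⧸ Hxy) = QuotientGroup.mk b := by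
      rw [QuotientGroup.mk_mul, (QuotientGroup.eq_one_iff a).mpr ha, one_mul]
    simp only at hxy
    rw [hmk] at hxy
    obtain ⟨w, hw, hw2⟩ := h1 hb
    simp only at hw2
    rw [← hw2] at hxy
    have hmem : y⁻¹ * w ∈ Kxy := QuotientGroup.eq.mp hxy.symm
    obtain ⟨k, hk, h, hh, rfl⟩ := hw
    refine ⟨y * (k * h)⁻¹ * k, ?_, h, hh, by group⟩
    have hy : y * (k * h)⁻¹ ∈ Kxy := by
      have := Kxy.inv_mem (‹Kxy.Normal›.mem_comm hmem)
      simpa using this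
    exact Kxy.mul_mem hy hk
  · rintro ⟨k, hk, h, hh, rfl⟩
    obtain ⟨x, hx, hx2⟩ := h2 hh
    refine ⟨x, hx, ?_⟩
    simp only at hx2 ⊢
    have h3 : φxy (QuotientGroup.mk x) = QuotientGroup.mk h := by
      rw [hx2]; simp
    rw [h3, QuotientGroup.mk_mul, (QuotientGroup.eq_one_iff k).mpr hk, one_mul]
end
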